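/- Let κ be a regular infinite cardinal, let Y = {F_{ξ,ζ} : ξ < κ, ζ < κ} be a stratified set of nonprincipal ultrafilters on κ, let {D_t : t ∈ [κ]^{<ω}} be a partition of κ, let W = {F_{ξ,ζ} ∈ Y : D_t ∈ F_{ξ,ζ} for some t ∈ [κ]^{<ω}}, and let W(γ) (γ < κ⁺) and W̃ be defined from W as below. Then every F_{ξ,ζ} ∈ W̃ ∖ W(1) belongs to the topological closure of W(1) ∖ W in βκ. -/

import Mathlib

/-! By induction on `γ`, `W(γ) ⊆ W(1) ∪ cl (W(1) ∖ W)`. Suppose `G` enters at stage `δ + 1`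
through `η > δ` and `A ∈ G`, but `G ∉ W(1)`. Then no `A' ∈ G` has all its `F η ν` in `W`, so for
every `B ∈ G` some `F η ν ∋ A ∩ B` lies in `W(δ) ∖ W`, hence, by induction, in `cl (W(1) ∖ W)`.
Thus every basic neighbourhood `{u | B ∈ u}` of `G` meets `cl (W(1) ∖ W)`. -/

noncomputable section

open Cardinal Set

namespace RFNote

variable {K : Type}

/-- A `κ`-indexed family of ultrafilters on `κ` is *`κ`-discrete* iff there is a partition
`{A a : a ∈ κ}` of `κ` with `A a ∈ X a` for every `a`. -/
def KDiscrete (X : K → Ultrafilter K) : Prop :=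
  ∃ A : K → Set K, (Pairwise fun a b => Disjoint (A a) (A b)) ∧
    (⋃ a, A a) = Set.univ ∧ ∀ a, A a ∈ X a

/-- `Σ(X, F) = {A ⊆ κ : {a : A ∈ X a} ∈ F}`, the sum of the family `X` along `F`. -/
def SigmaU (X : K → Ultrafilter K) (F : Ultrafilter K) : Ultrafilter K := F.bind X

/-- The Rudin–Frolík (pre)order: `F ≤_RF G` iff `G = Σ(X, F)` for some `κ`-discrete `X`. -/
def RFle (F G : Ultrafilter K) : Prop :=
  ∃ X : K → Ultrafilter K, KDiscrete X ∧ G = SigmaU X F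

/-- `F =_RF G` iff `F ≤_RF G` and `G ≤_RF F`. -/
def RFeq (F G : Ultrafilter K) : Prop := RFle F G ∧ RFle G F

/-- `F <_RF G` iff `F ≤_RF G` and not `F =_RF G`. -/
def RFlt (F G : Ultrafilter K) : Prop := RFle F G ∧ ¬ RFeq F G

/-- An ultrafilter is nonprincipal iff it is not of the form `pure a`. -/
def NonPrincipal (F : Ultrafilter K) : Prop := ∀ a : K, F ≠ pure a

/-- A nonprincipal ultrafilter is minimal in the Rudin–Frolík order iff no nonprincipal
ultrafilter lies strictly below it. -/
def RFMinimal (F : Ultrafilter K) : Prop :=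
  NonPrincipal F ∧ ¬ ∃ G : Ultrafilter K, NonPrincipal G ∧ RFlt G F

/-- `Ω(Z, G) = F`: there is a `κ`-discrete enumeration `X` of the set `Z` with `Σ(X, F) = G`. -/
def OmegaEq (Z : Set (Ultrafilter K)) (G F : Ultrafilter K) : Prop :=
  ∃ X : K → Ultrafilter K, KDiscrete X ∧ Set.range X = Z ∧ SigmaU X F = G

/-- The type of an ultrafilter: its orbit under self-homeomorphisms of `βκ`. -/
def UType (G : Ultrafilter K) : Set (Ultrafilter K) :=
  {H | ∃ e : Ultrafilter K ≃ₜ Ultrafilter K, e G = H}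

/-- A partition of `κ` indexed by the finite subsets of `κ`. -/
def IsPartitionFin (D : Finset K → Set K) : Prop :=
  (Pairwise fun s t => Disjoint (D s) (D t)) ∧ (⋃ t, D t) = Set.univ

/-- `φ : [κ⁺]^{<ω} → [κ]^{<ω}` is `κ`-shrinking iff it is monotone and sends `∅` to `∅`.
Here `L` is a set of cardinality `κ⁺`. -/
def Shrinking {L : Type} (φ : Finset L → Finset K) : Prop :=
  (∀ p q : Finset L, p ⊆ q → φ p ⊆ φ q) ∧ φ (∅ : Finset L) = (∅ : Finset K)

/-- A stratified set of filters `{F ξ ζ : ξ < τo, ζ < κo}` (indexed by ordinals). -/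
def Stratified (τo κo : Ordinal.{0}) (F : Ordinal.{0} → Ordinal.{0} → Ultrafilter K) : Prop :=
  (∀ ξ < τo, ∃ A : Ordinal.{0} → Set K,
      (∀ ζ < κo, ∀ ζ' < κo, ζ ≠ ζ' → Disjoint (A ζ) (A ζ')) ∧
      (⋃ ζ ∈ Set.Iio κo, A ζ) = Set.univ ∧
      ∀ ζ < κo, A ζ ∈ F ξ ζ) ∧
  (∀ ξ ν : Ordinal.{0}, ξ < ν → ν < τo → ∀ ζ < κo, ∀ S : Set K, S ∈ F ξ ζ →
      Cardinal.mk {μ : Ordinal.{0} // μ < κo ∧ S ∈ F ν μ} = Cardinal.lift.{1} (Cardinal.mk K))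

/-- The transfinite iteration `W(γ)` of 2.7: `W(0) = W₀`, unions at limits, and
`W(γ+1) = W(γ) ∪ {F ξ ζ : ∃ η > γ, ∃ A ∈ F ξ ζ, {F η ν : A ∈ F η ν} ⊆ W(γ)}`. -/
def WIter (τo κo : Ordinal.{0}) (F : Ordinal.{0} → Ordinal.{0} → Ultrafilter K)
    (W0 : Set (Ultrafilter K)) : Ordinal.{0} → Set (Ultrafilter K) := fun γ =>
  Ordinal.limitRecOn γ W0
    (fun δ ih => ih ∪ {G : Ultrafilter K | (∃ ξ < τo, ∃ ζ < κo, G = F ξ ζ) ∧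
        ∃ η : Ordinal.{0}, δ < η ∧ η < τo ∧ ∃ A ∈ G,
          {H : Ultrafilter K | ∃ ν < κo, H = F η ν ∧ A ∈ F η ν} ⊆ ih})
    (fun γ' _ ih => ⋃ β : Ordinal.{0}, ⋃ h : β < γ', ih β h)

/-- `W̃ = ⋃_{γ < κ⁺} W(γ)`. -/
def Wtilde (τo κo : Ordinal.{0}) (F : Ordinal.{0} → Ordinal.{0} → Ultrafilter K)
    (W0 : Set (Ultrafilter K)) : Set (Ultrafilter K) :=
  ⋃ γ : Ordinal.{0}, ⋃ _ : γ < (Order.succ (Cardinal.mk K)).ord, WIter τo κo F W0 γ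

/-- The set `W = {F ξ ζ : D t ∈ F ξ ζ for some t ∈ [κ]^{<ω}}` determined by a partition `D`. -/
def Wzero (τo κo : Ordinal.{0}) (F : Ordinal.{0} → Ordinal.{0} → Ultrafilter K)
    (D : Finset K → Set K) : Set (Ultrafilter K) :=
  {G : Ultrafilter K | (∃ ξ < τo, ∃ ζ < κo, G = F ξ ζ) ∧ ∃ t : Finset K, D t ∈ G}

/-- Property (P) of 2.9, for a given partition `D` and `κ`-shrinking function `φ`. -/
def PropertyP {L : Type} (τo κo : Ordinal.{0}) (F : Ordinal.{0} → Ordinal.{0} → Ultrafilter K)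
    (φ : Finset L → Finset K) (D : Finset K → Set K) : Prop :=
  ∀ ν < τo, ∀ μ < κo,
    F ν μ ∉ Wtilde τo κo F (Wzero τo κo F D) →
      ∃ Wf : L → Set K, (∀ η : L, Wf η ∈ F ν μ) ∧
        ∀ p : Finset L,
          Cardinal.mk ↥((⋂ η ∈ p, Wf η) ∩ D (φ p)) < Cardinal.mk K

/-- A stratified set of ultrafilters with uniform predecessor `Fu` (2.10). -/
def UniformPred (τo κo : Ordinal.{0}) (F : Ordinal.{0} → Ordinal.{0} → Ultrafilter K)
    (Fu : Ultrafilter K) : Prop :=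
  Stratified τo κo F ∧
  (∀ (L : Type) (φ : Finset L → Finset K) (D : Finset K → Set K),
      Cardinal.mk L = Order.succ (Cardinal.mk K) → Shrinking φ → IsPartitionFin D →
      PropertyP τo κo F φ D) ∧
  (∀ ξ < τo, ∀ ζ < κo,
      OmegaEq {G : Ultrafilter K | ∃ ν < κo, G = F (ξ + 1) ν} (F ξ ζ) Fu) ∧
  (∀ ξ : Ordinal.{0}, ξ < τo → Order.IsSuccLimit ξ → ∀ ζ < κo,
      OmegaEq {G : Ultrafilter K | ∃ μ < ξ, ∃ ν < κo, G = F μ ν} (F ξ ζ) Fu)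

theorem _root_.Ultrafilter.mem_closure_iff {α : Type*} {T : Set (Ultrafilter α)}
    {G : Ultrafilter α} : G ∈ closure T ↔ ∀ B ∈ G, ∃ H ∈ T, B ∈ H := by
  rw [ultrafilterBasis_is_basis.mem_closure_iff]
  constructor
  · intro h B hB
    obtain ⟨H, hBH, hHT⟩ := h _ ⟨B, rfl⟩ hB
    exact ⟨H, hHT, hBH⟩
  · rintro h _ ⟨B, rfl⟩ hB
    obtain ⟨H, hHT, hBH⟩ := h B hB
    exact ⟨H, hBH, hHT⟩

def WStep (τo κo : Ordinal.{0}) (F : Ordinal.{0} → Ordinal.{0} → Ultrafilter K)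
    (δ : Ordinal.{0}) (V : Set (Ultrafilter K)) : Set (Ultrafilter K) :=
  {G : Ultrafilter K | (∃ ξ < τo, ∃ ζ < κo, G = F ξ ζ) ∧
    ∃ η : Ordinal.{0}, δ < η ∧ η < τo ∧ ∃ A ∈ G,
      {H : Ultrafilter K | ∃ ν < κo, H = F η ν ∧ A ∈ F η ν} ⊆ V}

section WIter

variable {τo κo : Ordinal.{0}} {F : Ordinal.{0} → Ordinal.{0} → Ultrafilter K}
  {W0 : Set (Ultrafilter K)}

lemma wIter_zero : WIter τo κo F W0 0 = W0 :=
  Ordinal.limitRecOn_zero _ _ _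

lemma wIter_add_one (δ : Ordinal.{0}) :
    WIter τo κo F W0 (δ + 1) = WIter τo κo F W0 δ ∪ WStep τo κo F δ (WIter τo κo F W0 δ) :=
  Ordinal.limitRecOn_add_one _ _ _ _

lemma wIter_limit {γ : Ordinal.{0}} (h : Order.IsSuccLimit γ) :
    WIter τo κo F W0 γ = ⋃ β < γ, WIter τo κo F W0 β :=
  Ordinal.limitRecOn_limit _ _ _ _ h

lemma wIter_one : WIter τo κo F W0 1 = W0 ∪ WStep τo κo F 0 W0 := by
  rw [← zero_add 1, wIter_add_one, wIter_zero]

lemma wStep_subset_one_union_closure {δ : Ordinal.{0}} {V : Set (Ultrafilter K)}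
    (hV : V ⊆ WIter τo κo F W0 1 ∪ closure (WIter τo κo F W0 1 \ W0)) :
    WStep τo κo F δ V ⊆ WIter τo κo F W0 1 ∪ closure (WIter τo κo F W0 1 \ W0) := by
  rintro G ⟨hG, η, hδη, hητ, A, hA, hsub⟩
  by_cases hW0 : ∃ A' ∈ G, ∀ ν < κo, A' ∈ F η ν → F η ν ∈ W0
  · obtain ⟨A', hA', hW0⟩ := hW0
    rw [wIter_one]
    refine Or.inl (Or.inr ⟨hG, η, pos_of_gt hδη, hητ, A', hA', ?_⟩)
    rintro _ ⟨ν, hν, rfl, hA'ν⟩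
    exact hW0 ν hν hA'ν
  push Not at hW0
  refine Or.inr ?_
  rw [← closure_closure, Ultrafilter.mem_closure_iff]
  intro B hB
  obtain ⟨ν, hν, hBAν, hν₀⟩ := hW0 (B ∩ A) (G.toFilter.inter_mem hB hA)
  have hV' : F η ν ∈ V := hsub ⟨ν, hν, rfl, Filter.mem_of_superset hBAν inter_subset_right⟩
  refine ⟨F η ν, ?_, Filter.mem_of_superset hBAν inter_subset_left⟩
  rcases hV hV' with h₁ | hcl
  · exact subset_closure ⟨h₁, hν₀⟩
  · exact hcl

lemma wIter_subset_one_union_closure (γ : Ordinal.{0}) :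
    WIter τo κo F W0 γ ⊆ WIter τo κo F W0 1 ∪ closure (WIter τo κo F W0 1 \ W0) := by
  induction γ using Ordinal.limitRecOn with
  | zero =>
    rw [wIter_zero, wIter_one]
    exact subset_union_left.trans subset_union_left
  | add_one δ ih =>
    rw [wIter_add_one]
    exact union_subset ih (wStep_subset_one_union_closure ih)
  | limit γ hγ ih =>
    rw [wIter_limit hγ]
    exact iUnion₂_subset ih

end WIter

theorem mem_closure_of_mem_Wtilde_general
    (F : Ordinal.{0} → Ordinal.{0} → Ultrafilter K)
    (D : Finset K → Set K) :
    ∀ ξ < (Cardinal.mk K).ord, ∀ ζ < (Cardinal.mk K).ord,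
      F ξ ζ ∈ Wtilde (Cardinal.mk K).ord (Cardinal.mk K).ord F
          (Wzero (Cardinal.mk K).ord (Cardinal.mk K).ord F D) →
      F ξ ζ ∉ WIter (Cardinal.mk K).ord (Cardinal.mk K).ord F
          (Wzero (Cardinal.mk K).ord (Cardinal.mk K).ord F D) 1 →
      F ξ ζ ∈ closure
          (WIter (Cardinal.mk K).ord (Cardinal.mk K).ord F
              (Wzero (Cardinal.mk K).ord (Cardinal.mk K).ord F D) 1 \
            Wzero (Cardinal.mk K).ord (Cardinal.mk K).ord F D) := by
  intro ξ _ ζ _ hWt hnot₁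
  rw [Wtilde, mem_iUnion₂] at hWt
  obtain ⟨γ, -, hγ⟩ := hWt
  exact (wIter_subset_one_union_closure γ hγ).resolve_left hnot₁

/-- If `Y = {F ξ ζ : ξ, ζ < κ}` is a stratified set of nonprincipal ultrafilters on a
regular `κ`, `{D t : t ∈ [κ]^{<ω}}` is a partition of `κ`, and `W`, `W(γ)`, `W̃` are
defined as in 2.7, then every `F ξ ζ ∈ W̃ ∖ W(1)` lies in the closure of `W(1) ∖ W`
in `βκ`. -/
theorem mem_closure_of_mem_Wtilde
    (hreg : (Cardinal.mk K).IsRegular)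
    (F : Ordinal.{0} → Ordinal.{0} → Ultrafilter K)
    (hnp : ∀ ξ < (Cardinal.mk K).ord, ∀ ζ < (Cardinal.mk K).ord, NonPrincipal (F ξ ζ))
    (hstrat : Stratified (Cardinal.mk K).ord (Cardinal.mk K).ord F)
    (D : Finset K → Set K) (hD : IsPartitionFin D) :
    ∀ ξ < (Cardinal.mk K).ord, ∀ ζ < (Cardinal.mk K).ord,
      F ξ ζ ∈ Wtilde (Cardinal.mk K).ord (Cardinal.mk K).ord F
          (Wzero (Cardinal.mk K).ord (Cardinal.mk K).ord F D) →
      F ξ ζ ∉ WIter (Cardinal.mk K).ord (Cardinal.mk K).ord F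
          (Wzero (Cardinal.mk K).ord (Cardinal.mk K).ord F D) 1 →
      F ξ ζ ∈ closure
          (WIter (Cardinal.mk K).ord (Cardinal.mk K).ord F
              (Wzero (Cardinal.mk K).ord (Cardinal.mk K).ord F D) 1 \
            Wzero (Cardinal.mk K).ord (Cardinal.mk K).ord F D) :=
  mem_closure_of_mem_Wtilde_general F D

end RFNote
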